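/- Let n ≥ 2 and 0 < ε < 1. Let S be uniformly distributed on the 2^n − 1 nonzero elements of (ℤ/2ℤ)^n, and given S = s let J have conditional distribution P(J = j | S = s) = (1+ε)/2^n if j·s = 0 and (1−ε)/2^n if j·s = 1. Then the mutual information I(S;J) = H(J) − H(J|S), which equals −(1 − (1+ε)/2^n) log₂((1 − (1+ε)/2^n)/(2^n − 1)) + (2^(n−1) − 1)((1+ε)/2^n) log₂((1+ε)/2^n) + ((1−ε)/2) log₂((1−ε)/2^n), is strictly positive. (Thus a single quantum query with an unentangled pseudo-pure state yields positive information about Simon's parameter s for every ε > 0, whereas a single classical query yields none.) -/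

import Mathlib

open Finset

/-- Conditional Simon outcome distribution for a pseudo-pure input of purity `ε`,
given period `s`: `P(J = j | S = s) = (1+ε)/2^n` if `j·s = 0` and `(1-ε)/2^n` otherwise. -/
noncomputable def simonPPSCond (n : ℕ) (ε : ℝ) (s j : Fin n → ZMod 2) : ℝ :=
  if ∑ i, j i * s i = 0 then (1 + ε) / 2 ^ n else (1 - ε) / 2 ^ n

/-- Marginal distribution of the outcome `J` when the period `S` is uniform on the
`2^n - 1` nonzero elements of `(ℤ/2ℤ)ⁿ`. -/
noncomputable def simonPPSMarginal (n : ℕ) (ε : ℝ) (j : Fin n → ZMod 2) : ℝ :=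
  ∑ s ∈ univ.filter fun s : Fin n → ZMod 2 => s ≠ 0,
    (1 / ((2 : ℝ) ^ n - 1)) * simonPPSCond n ε s j

/-- The entropy `H(J)` of the outcome of one pseudo-pure Simon query. -/
noncomputable def simonPPSHJ (n : ℕ) (ε : ℝ) : ℝ :=
  -∑ j : Fin n → ZMod 2, simonPPSMarginal n ε j * Real.logb 2 (simonPPSMarginal n ε j)

/-- The conditional entropy `H(J|S) = Σ_s P(S = s) H(J | S = s)`. -/
noncomputable def simonPPSHJS (n : ℕ) (ε : ℝ) : ℝ :=
  ∑ s ∈ univ.filter fun s : Fin n → ZMod 2 => s ≠ 0,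
    (1 / ((2 : ℝ) ^ n - 1)) *
      (-∑ j : Fin n → ZMod 2, simonPPSCond n ε s j * Real.logb 2 (simonPPSCond n ε s j))

/-!
For a nonzero period `s`, the outcomes `j` are split evenly by the parity of `j·s`, so
`P(J = 0) = (1+ε)/2ⁿ` while every nonzero outcome has the same probability
`Q = (1 - (1+ε)/2ⁿ)/(2ⁿ-1) < 1/2ⁿ`. After this computation `I(S;J)` becomes the relative
entropy `(2ⁿ⁻¹-1)·P log(P/Q) + 2ⁿ⁻¹·B log(B/Q)` with `P = (1+ε)/2ⁿ`, `B = (1-ε)/2ⁿ`, whose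
weights balance against `Q`; Gibbs' inequality `x log(x/q) ≥ x - q` makes it positive as `P ≠ Q`.
-/

open Matrix

section DotProductFibers

variable {F : Type*} [Field F] [Fintype F] [DecidableEq F] {n : ℕ}

theorem card_filter_dotProduct_eq {w : Fin n → F} (hw : w ≠ 0) (c : F) :
    #{v : Fin n → F | v ⬝ᵥ w = c} = Fintype.card F ^ (n - 1) := by
  obtain ⟨i, hi⟩ : ∃ i, w i ≠ 0 := Function.ne_iff.mp hw
  let f : (Fin n → F) →+ F := AddMonoidHom.mk' (· ⬝ᵥ w) fun u v => add_dotProduct u v w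
  have hsurj (c : F) : c ∈ Set.range f :=
    ⟨Pi.single i (c / w i), by simp [f, div_mul_cancel₀ c hi]⟩
  have hcard : Fintype.card (Fin n → F) = Fintype.card F * #{v | f v = c} := by
    rw [← card_univ, card_eq_sum_card_fiberwise (t := univ) fun v _ => mem_univ (f v),
      sum_congr rfl fun d _ => AddMonoidHom.card_fiber_eq_of_mem_range f (hsurj d) (hsurj c),
      sum_const, card_univ, smul_eq_mul]
  rw [Fintype.card_fun, Fintype.card_fin] at hcard
  obtain ⟨m, rfl⟩ := Nat.exists_eq_add_one.mpr i.pos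
  rw [pow_succ', Nat.mul_left_cancel_iff Fintype.card_pos] at hcard
  exact hcard.symm

theorem ZMod.sum_ite_dotProduct_eq_zero {M : Type*} [AddCommMonoid M] {w : Fin n → ZMod 2}
    (hw : w ≠ 0) (a b : M) :
    ∑ v : Fin n → ZMod 2, (if v ⬝ᵥ w = 0 then a else b) = 2 ^ (n - 1) • (a + b) := by
  have hne (v : Fin n → ZMod 2) : ¬ v ⬝ᵥ w = 0 ↔ v ⬝ᵥ w = 1 := by
    generalize v ⬝ᵥ w = x; revert x; decide
  rw [sum_ite, sum_const, sum_const, filter_congr fun v _ => hne v,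
    card_filter_dotProduct_eq hw, card_filter_dotProduct_eq hw, ZMod.card, smul_add]

end DotProductFibers

namespace Real

variable {x y : ℝ}

lemma sub_le_mul_log_div (hx : 0 < x) (hy : 0 < y) : x - y ≤ x * log (x / y) := by
  have h := mul_le_mul_of_nonneg_left (one_sub_inv_le_log_of_pos (div_pos hx hy)) hx.le
  rwa [inv_div, mul_one_sub, mul_div_cancel₀ _ hx.ne'] at h

lemma sub_lt_mul_log_div (hx : 0 < x) (hy : 0 < y) (hxy : x ≠ y) : x - y < x * log (x / y) := by
  have hyx : y / x ≠ 1 := fun h => hxy ((div_eq_one_iff_eq hx.ne').mp h).symm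
  have h := mul_lt_mul_of_pos_left (log_lt_sub_one_of_pos (div_pos hy hx) hyx) hx
  rw [mul_sub, mul_div_cancel₀ _ hx.ne', ← inv_div, log_inv] at h
  linarith

/-- Gibbs' inequality for two atoms. -/
lemma mul_logb_div_add_mul_logb_div_pos {c a b q : ℝ} (hc : 1 < c) (ha : 0 < a) (hb : 0 ≤ b)
    (hx : 0 < x) (hy : 0 < y) (hq : 0 < q) (hxq : x ≠ q) (hbal : a * x + b * y = (a + b) * q) :
    0 < a * x * logb c (x / q) + b * y * logb c (y / q) := by
  have hx' := mul_lt_mul_of_pos_left (sub_lt_mul_log_div hx hq hxq) ha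
  have hy' := mul_le_mul_of_nonneg_left (sub_le_mul_log_div hy hq) hb
  have hsum : 0 < a * (x * log (x / q)) + b * (y * log (y / q)) := by linarith
  simp only [logb, mul_div_assoc']
  rw [← add_div]
  exact div_pos (by linarith) (log_pos hc)

end Real

section SimonPPS

variable {n : ℕ} {ε : ℝ}

lemma simonPPSCond_eq_ite (s j : Fin n → ZMod 2) :
    simonPPSCond n ε s j = if j ⬝ᵥ s = 0 then (1 + ε) / 2 ^ n else (1 - ε) / 2 ^ n := rfl

lemma two_pow_sub_one_pos (hn : 1 ≤ n) : (0 : ℝ) < 2 ^ n - 1 := by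
  have : (1 : ℝ) < 2 ^ n := one_lt_pow₀ one_lt_two (by omega)
  linarith

lemma sum_erase_zero_const (c : ℝ) :
    ∑ _v ∈ univ.erase (0 : Fin n → ZMod 2), c = (2 ^ n - 1) * c := by
  simp [sub_mul]

lemma two_pow_pred_mul_div_two_pow (hn : 1 ≤ n) (a : ℝ) :
    (2 : ℝ) ^ (n - 1) * (a / 2 ^ n) = a / 2 := by
  obtain ⟨m, rfl⟩ := Nat.exists_eq_add_one.mpr hn
  rw [Nat.add_sub_cancel, pow_succ]
  field_simp

lemma simonPPSMarginal_eq (j : Fin n → ZMod 2) :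
    simonPPSMarginal n ε j =
      (∑ s, simonPPSCond n ε s j - simonPPSCond n ε 0 j) / (2 ^ n - 1) := by
  rw [simonPPSMarginal, filter_ne', ← mul_sum, sum_erase_eq_sub (mem_univ 0), one_div_mul_eq_div]

lemma simonPPSMarginal_zero (hn : 1 ≤ n) : simonPPSMarginal n ε 0 = (1 + ε) / 2 ^ n := by
  rw [simonPPSMarginal, filter_ne']
  simp only [simonPPSCond_eq_ite, zero_dotProduct, if_true, sum_erase_zero_const]
  field_simp [(two_pow_sub_one_pos hn).ne']

lemma simonPPSMarginal_of_ne_zero {j : Fin n → ZMod 2} (hj : j ≠ 0) :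
    simonPPSMarginal n ε j = (1 - (1 + ε) / 2 ^ n) / (2 ^ n - 1) := by
  have hsum : ∑ s, simonPPSCond n ε s j = 1 := by
    simp only [simonPPSCond_eq_ite, dotProduct_comm j]
    have hn : 1 ≤ n := Nat.pos_of_ne_zero <| by rintro rfl; exact hj (Subsingleton.elim _ _)
    rw [ZMod.sum_ite_dotProduct_eq_zero hj, nsmul_eq_mul, Nat.cast_pow, Nat.cast_ofNat,
      mul_add, two_pow_pred_mul_div_two_pow hn, two_pow_pred_mul_div_two_pow hn]
    ring
  rw [simonPPSMarginal_eq, hsum, simonPPSCond_eq_ite, dotProduct_zero, if_pos rfl]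

lemma simonPPSHJ_eq (hn : 1 ≤ n) :
    simonPPSHJ n ε = -((1 + ε) / 2 ^ n * Real.logb 2 ((1 + ε) / 2 ^ n) +
      (2 ^ n - 1) * ((1 - (1 + ε) / 2 ^ n) / (2 ^ n - 1) *
        Real.logb 2 ((1 - (1 + ε) / 2 ^ n) / (2 ^ n - 1)))) := by
  rw [simonPPSHJ, ← add_sum_erase _ _ (mem_univ 0), simonPPSMarginal_zero hn,
    sum_congr rfl fun j hj => by rw [simonPPSMarginal_of_ne_zero (ne_of_mem_erase hj)],
    sum_erase_zero_const]

lemma simonPPSHJS_eq (hn : 1 ≤ n) :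
    simonPPSHJS n ε = -(2 ^ (n - 1) * ((1 + ε) / 2 ^ n * Real.logb 2 ((1 + ε) / 2 ^ n) +
      (1 - ε) / 2 ^ n * Real.logb 2 ((1 - ε) / 2 ^ n))) := by
  have hinner (s : Fin n → ZMod 2) (hs : s ≠ 0) :
      ∑ j, simonPPSCond n ε s j * Real.logb 2 (simonPPSCond n ε s j) =
        2 ^ (n - 1) * ((1 + ε) / 2 ^ n * Real.logb 2 ((1 + ε) / 2 ^ n) +
          (1 - ε) / 2 ^ n * Real.logb 2 ((1 - ε) / 2 ^ n)) := by
    simp only [simonPPSCond_eq_ite, apply_ite (fun p => p * Real.logb 2 p)]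
    rw [ZMod.sum_ite_dotProduct_eq_zero hs, nsmul_eq_mul, Nat.cast_pow, Nat.cast_ofNat]
  rw [simonPPSHJS, filter_ne',
    sum_congr rfl fun s hs => by rw [hinner s (ne_of_mem_erase hs)], sum_erase_zero_const]
  field_simp [(two_pow_sub_one_pos hn).ne']

lemma simonPPS_nonzero_outcome_prob_pos_and_lt (hn : 1 ≤ n) (hε0 : 0 < ε) (hε1 : ε < 1) :
    0 < (1 - (1 + ε) / 2 ^ n) / (2 ^ n - 1) ∧
      (1 - (1 + ε) / 2 ^ n) / (2 ^ n - 1) < (1 + ε) / 2 ^ n := by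
  have h2 : (2 : ℝ) ≤ 2 ^ n := le_self_pow₀ one_le_two (by omega)
  have hN := two_pow_sub_one_pos (n := n) hn
  constructor
  · exact div_pos (sub_pos.2 ((div_lt_one (by positivity)).2 (by linarith))) hN
  · rw [div_lt_iff₀ hN]
    field_simp
    nlinarith

end SimonPPS

/-- One Simon query with an unentangled pseudo-pure state of purity `0 < ε < 1` yields
mutual information `I(S;J) = H(J) - H(J|S)` equal to
`-(1 - (1+ε)/2^n) log₂((1 - (1+ε)/2^n)/(2^n-1)) + (2^(n-1)-1)((1+ε)/2^n) log₂((1+ε)/2^n)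
 + ((1-ε)/2) log₂((1-ε)/2^n)`, and this quantity is strictly positive,
whereas a single classical query yields no information. -/
theorem simon_pps_mutual_information_pos (n : ℕ) (hn : 2 ≤ n) (ε : ℝ)
    (hε0 : 0 < ε) (hε1 : ε < 1) :
    simonPPSHJ n ε - simonPPSHJS n ε =
      -(1 - (1 + ε) / 2 ^ n) *
          Real.logb 2 ((1 - (1 + ε) / 2 ^ n) / ((2 : ℝ) ^ n - 1)) +
        ((2 : ℝ) ^ (n - 1) - 1) * ((1 + ε) / 2 ^ n) * Real.logb 2 ((1 + ε) / 2 ^ n) +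
        ((1 - ε) / 2) * Real.logb 2 ((1 - ε) / 2 ^ n) ∧
    0 < simonPPSHJ n ε - simonPPSHJS n ε := by
  have hn1 : 1 ≤ n := by omega
  rw [simonPPSHJ_eq hn1, simonPPSHJS_eq hn1]
  have hk : (1 : ℝ) < 2 ^ (n - 1) := one_lt_pow₀ one_lt_two (by omega)
  have hN : (2 : ℝ) ^ n = 2 ^ (n - 1) + 2 ^ (n - 1) := by
    rw [← two_mul, ← pow_succ', Nat.sub_add_cancel hn1]
  have hP := two_pow_pred_mul_div_two_pow hn1 (1 + ε)
  have hB := two_pow_pred_mul_div_two_pow hn1 (1 - ε)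
  have hB0 : 0 < (1 - ε) / 2 ^ n := div_pos (by linarith) (by positivity)
  obtain ⟨hQ0, hQP⟩ := simonPPS_nonzero_outcome_prob_pos_and_lt hn1 hε0 hε1
  set P := (1 + ε) / 2 ^ n
  set B := (1 - ε) / 2 ^ n
  set Q := (1 - P) / (2 ^ n - 1)
  have hQ : (2 ^ n - 1) * Q = 1 - P := mul_div_cancel₀ _ (two_pow_sub_one_pos hn1).ne'
  clear_value P B Q
  have hbal : (2 ^ (n - 1) - 1) * P + 2 ^ (n - 1) * B = (2 ^ (n - 1) - 1 + 2 ^ (n - 1)) * Q := by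
    linear_combination hP + hB - hQ + Q * hN
  refine ⟨by linear_combination (-Real.logb 2 Q) * hQ + Real.logb 2 B * hB, ?_⟩
  have hgibbs := Real.mul_logb_div_add_mul_logb_div_pos one_lt_two (sub_pos.2 hk)
    (by positivity) (hQ0.trans hQP) hB0 hQ0 hQP.ne' hbal
  rw [Real.logb_div (hQ0.trans hQP).ne' hQ0.ne', Real.logb_div hB0.ne' hQ0.ne'] at hgibbs
  linear_combination hgibbs - Real.logb 2 Q * hbal + Real.logb 2 Q * Q * hN
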